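/- Let $A = R[[t]]$ where $R$ is a complete discrete valuation ring of mixed characteristic $(0,p)$ with valuation $v$ normalized by $v(p) = 1$. Let $f \in A^\times$ be a unit which is not a $p$-th power in $A$, and suppose the special fiber of the normalization $B$ of $A$ in $\mathrm{Frac}(A)[y]/(y^p - f)$ is reduced. Then $\mu := \sup \{ v_0(f - h^p) : h \in A^\times \}$ satisfies $\mu < p/(p-1)$, where $v_0$ is the Gauss valuation on $A$ (the $\pi$-adic valuation of the ideal $\pi A$ extended to $A$). -/

import Mathlib

set_option synthInstance.maxHeartbeats 1000000
set_option maxHeartbeats 1000000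

/-- The Gauss valuation `v₀` on `A = R[[t]]`, normalized so that `v₀ c = 1`:
`v₀ g = (min_i v(coeff i g)) / v(c)`, where `v` is the `ℕ∞`-valued additive valuation of
the discrete valuation ring `R`.  (Taking `c = p` gives the normalization `v(p) = 1`.) -/
noncomputable def gaussV0 (R : Type*) [CommRing R] [IsDomain R] [IsDiscreteValuationRing R]
    (c : R) (g : PowerSeries R) : ℚ :=
  (((⨅ i : ℕ, IsDiscreteValuationRing.addVal R (PowerSeries.coeff (R := R) i g)).toNat : ℚ)) /
    ((IsDiscreteValuationRing.addVal R c).toNat : ℚ)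

/-!
Write `p = w π^e` with `w` a unit. If `f - h^p = π^n g` with `n = e + s` and `n ≤ p s`, which is
the condition `n (p - 1) ≥ p e`, then by the binomial theorem
`f - (h + π^s u)^p ≡ π^n (g - w h^(p-1) u - π^(p s - n) u^p)` modulo `π^(n+1)`.
The equation `π^(p s - n) u^p + w h^(p-1) u = g` is solvable modulo `π`: it is linear when
`p s > n`, and otherwise an Artin–Schreier equation over `k[[t]]`, solvable by Hensel's lemma
since `k` is algebraically closed. Iterating and passing to the `π`-adic limit in `R[[t]]` would
make `f` a `p`-th power. Hence `v₀(f - h^p) = m/e` with `m (p - 1) < p e` for every unit `h`;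
these values form a finite set, so the supremum is attained and is `< p/(p-1)`.
-/

open PowerSeries IsLocalRing

section CommRing

variable {S : Type*} [CommRing S]

theorem smodEq_span_singleton_pow_iff {a x y : S} {n : ℕ} :
    x ≡ y [SMOD (Ideal.span {a} ^ n • ⊤ : Submodule S S)] ↔ a ^ n ∣ x - y := by
  rw [SModEq.sub_mem, smul_eq_mul, Ideal.mul_top, Ideal.span_singleton_pow,
    Ideal.mem_span_singleton]

theorem exists_eval_eq_zero_of_forall_exists_approx {a : S} [IsAdicComplete (Ideal.span {a}) S]
    (F : Polynomial S) (P : S → Prop) {N e : ℕ}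
    (step : ∀ n, N ≤ n → ∀ x, P x → a ^ n ∣ F.eval x →
      ∃ x', P x' ∧ a ^ (n + 1) ∣ F.eval x' ∧ a ^ (n - e) ∣ x' - x)
    {x₀ : S} (hx₀ : P x₀) (h₀ : a ^ N ∣ F.eval x₀) : ∃ x, F.eval x = 0 := by
  choose! next hnextP hnext hnext_sub using step
  let x : ℕ → S := fun m => Nat.rec x₀ (fun m xm => next (N + m) xm) m
  have hx : ∀ m, P (x m) ∧ a ^ (N + m) ∣ F.eval (x m) := by
    intro m
    induction m with
    | zero => exact ⟨hx₀, h₀⟩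
    | succ m ih =>
      have hm := Nat.le_add_right N m
      exact ⟨hnextP _ hm _ ih.1 ih.2, hnext _ hm _ ih.1 ih.2⟩
  have hcauchy : AdicCompletion.IsAdicCauchy (Ideal.span {a}) S (fun m => x (m + e)) := by
    rw [AdicCompletion.isAdicCauchy_iff]
    intro m
    rw [smodEq_span_singleton_pow_iff, ← neg_sub, dvd_neg, show m + 1 + e = m + e + 1 by omega]
    exact (pow_dvd_pow a (by omega)).trans
      (hnext_sub (N + (m + e)) (Nat.le_add_right _ _) _ (hx _).1 (hx _).2)
  obtain ⟨L, hL⟩ := IsPrecomplete.prec inferInstance hcauchy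
  refine ⟨L, IsHausdorff.haus (I := Ideal.span {a}) inferInstance _ fun m => ?_⟩
  rw [smodEq_span_singleton_pow_iff, sub_zero]
  have h1 : a ^ m ∣ F.eval (x (m + e)) := (pow_dvd_pow a (by omega)).trans (hx _).2
  have h2 : a ^ m ∣ F.eval (x (m + e)) - F.eval L :=
    (smodEq_span_singleton_pow_iff.mp (hL m)).trans (Polynomial.sub_dvd_eval_sub _ _ _)
  simpa using dvd_sub h1 h2

theorem isUnit_of_dvd_sub [IsLocalRing S] {a x y : S} (ha : ¬IsUnit a) (hx : IsUnit x)
    (h : a ∣ y - x) : IsUnit y := by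
  refine (isUnit_or_isUnit_of_isUnit_add (a := y) (b := x - y) (by rwa [add_sub_cancel]))
    |>.resolve_right fun hxy => ha (isUnit_of_dvd_unit ?_ hxy)
  rw [← neg_sub]
  exact dvd_neg.mpr h

theorem exists_add_pow_prime_eq_add_mul_sq {p : ℕ} (hp : p.Prime) (a b : S) :
    ∃ r, (a + b) ^ p = a ^ p + p * a ^ (p - 1) * b + b ^ p + p * b ^ 2 * r := by
  have hmem : p - 1 ∈ Finset.Ioo 0 p := by simp [Finset.mem_Ioo, hp.one_lt, hp.pos]
  obtain ⟨r, hr⟩ : b ^ 2 ∣ ∑ k ∈ (Finset.Ioo 0 p).erase (p - 1),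
      a ^ k * b ^ (p - k) * ((p.choose k / p : ℕ) : S) := by
    refine Finset.dvd_sum fun k hk => ((pow_dvd_pow b ?_).mul_left _).mul_right _
    simp only [Finset.mem_erase, Finset.mem_Ioo] at hk
    omega
  refine ⟨r, ?_⟩
  rw [add_pow_prime_eq' hp, ← Finset.add_sum_erase _ _ hmem, hr,
    Nat.sub_sub_self hp.one_lt.le, Nat.choose_symm hp.one_lt.le, Nat.choose_one_right,
    Nat.div_self hp.pos]
  ring

end CommRing

namespace PowerSeries

variable {R : Type*} [CommRing R]

theorem C_dvd_iff {r : R} {φ : R⟦X⟧} : C r ∣ φ ↔ ∀ n, r ∣ coeff n φ := by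
  refine ⟨fun ⟨ψ, hψ⟩ n => ⟨coeff n ψ, by rw [hψ, coeff_C_mul]⟩, fun h => ?_⟩
  choose ψ hψ using h
  exact ⟨mk ψ, ext fun n => by rw [coeff_C_mul, coeff_mk, ← hψ]⟩

theorem isAdicComplete_span_C (r : R) [IsAdicComplete (Ideal.span {r}) R] :
    IsAdicComplete (Ideal.span {C r}) R⟦X⟧ where
  haus' φ hφ := by
    ext i
    refine IsHausdorff.haus (I := Ideal.span {r}) inferInstance _ fun n => ?_
    have := smodEq_span_singleton_pow_iff.mp (hφ n)
    rw [sub_zero, ← map_pow, C_dvd_iff] at this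
    rw [smodEq_span_singleton_pow_iff, sub_zero]
    exact this i
  prec' φ hφ := by
    choose L hL using fun i => IsPrecomplete.prec (I := Ideal.span {r}) inferInstance
      (f := fun m => coeff i (φ m)) fun hmn => by
        have := smodEq_span_singleton_pow_iff.mp (hφ hmn)
        rw [← map_pow, C_dvd_iff] at this
        rw [smodEq_span_singleton_pow_iff, ← map_sub]
        exact this i
    refine ⟨mk L, fun n => ?_⟩
    rw [smodEq_span_singleton_pow_iff, ← map_pow, C_dvd_iff]
    intro i
    rw [map_sub, coeff_mk, ← smodEq_span_singleton_pow_iff]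
    exact hL i n

theorem exists_pow_add_mul_eq {k : Type*} [Field k] [IsAlgClosed k] {p : ℕ} (hp : p.Prime)
    [CharP k p] {c : k⟦X⟧} (hc : IsUnit c) (b : k⟦X⟧) : ∃ x : k⟦X⟧, x ^ p + c * x = b := by
  let F : Polynomial k⟦X⟧ := .X ^ p + (.C c * .X + .C (-b))
  have hdeg : (Polynomial.C c * .X + .C (-b)).degree < p :=
    Polynomial.degree_linear_le.trans_lt (by exact_mod_cast hp.one_lt)
  have hF : F.Monic := Polynomial.monic_X_pow_add hdeg
  obtain ⟨α, hα⟩ : ∃ α, (F.map (constantCoeff (R := k))).IsRoot α := by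
    refine IsAlgClosed.exists_root _ ?_
    rw [hF.degree_map, Polynomial.degree_add_eq_left_of_degree_lt
      (by rwa [Polynomial.degree_X_pow]), Polynomial.degree_X_pow]
    exact_mod_cast hp.ne_zero
  have hroot : F.eval (C α) ∈ Ideal.span {X} := by
    rw [Ideal.mem_span_singleton, X_dvd_iff, ← Polynomial.eval₂_hom, ← Polynomial.eval_map,
      constantCoeff_C]
    exact hα
  have hder : F.derivative.eval (C α) = c := by
    have hp0 : (p : k⟦X⟧) = 0 := by rw [← map_natCast (C (R := k)), CharP.cast_eq_zero, map_zero]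
    simp [F, Polynomial.derivative_X_pow, hp0]
  obtain ⟨x, hx, -⟩ := HenselianRing.is_henselian F hF (C α) hroot (by rw [hder]; exact hc.map _)
  refine ⟨x, ?_⟩
  simp only [Polynomial.IsRoot, F, Polynomial.eval_add, Polynomial.eval_pow, Polynomial.eval_mul,
    Polynomial.eval_C, Polynomial.eval_X] at hx
  linear_combination hx

end PowerSeries

section UniformizedLocalRing

variable {R : Type*} [CommRing R] [IsLocalRing R] {π : R}

theorem PowerSeries.C_dvd_iff_map_residue_eq_zero (hπ : maximalIdeal R = Ideal.span {π})
    {φ : R⟦X⟧} : C π ∣ φ ↔ map (residue R) φ = 0 := by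
  simp [C_dvd_iff, PowerSeries.ext_iff, residue_eq_zero_iff, hπ, Ideal.mem_span_singleton]

theorem not_isUnit_C_of_maximalIdeal_eq (hπ : maximalIdeal R = Ideal.span {π}) :
    ¬IsUnit (C π : R⟦X⟧) := by
  rw [isUnit_iff_constantCoeff, constantCoeff_C, ← mem_nonunits_iff, ← mem_maximalIdeal, hπ]
  exact Ideal.mem_span_singleton_self π

variable {p : ℕ} [CharP (ResidueField R) p] {w : R} {e : ℕ}

theorem pos_of_natCast_eq_mul_pow (hw : IsUnit w) (hpw : (p : R) = w * π ^ e) : 0 < e := by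
  refine Nat.pos_of_ne_zero fun he => ?_
  have : IsUnit (residue R p) := by rw [hpw, he, pow_zero, mul_one]; exact hw.map _
  simp [CharP.cast_eq_zero] at this

variable [IsAlgClosed (ResidueField R)]

theorem exists_C_dvd_C_pow_mul_pow_add_mul_sub (hπ : maximalIdeal R = Ideal.span {π})
    (hp : p.Prime) (m : ℕ) {c : R⟦X⟧} (hc : IsUnit c) (b : R⟦X⟧) :
    ∃ u, C π ∣ C π ^ m * u ^ p + c * u - b := by
  rcases m with _ | m
  · obtain ⟨x, hx⟩ := exists_pow_add_mul_eq hp (hc.map (map (residue R))) (map (residue R) b)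
    obtain ⟨u, rfl⟩ := map_surjective _ residue_surjective x
    refine ⟨u, (C_dvd_iff_map_residue_eq_zero hπ).mpr ?_⟩
    simp [hx]
  · refine ⟨hc.unit⁻¹ * b, C π ^ m * (hc.unit⁻¹ * b) ^ p, ?_⟩
    rw [← mul_assoc, hc.mul_val_inv, one_mul]
    ring

theorem exists_isUnit_C_pow_succ_dvd_sub_pow (hπ : maximalIdeal R = Ideal.span {π})
    (hp : p.Prime) (hw : IsUnit w) (hpw : (p : R) = w * π ^ e) {f h : R⟦X⟧} (hh : IsUnit h)
    {n : ℕ} (hn : p * e ≤ n * (p - 1)) (hdvd : C π ^ n ∣ f - h ^ p) :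
    ∃ h', IsUnit h' ∧ C π ^ (n + 1) ∣ f - h' ^ p ∧ C π ^ (n - e) ∣ h' - h := by
  have he := pos_of_natCast_eq_mul_pow hw hpw
  obtain ⟨q, rfl⟩ : ∃ q, p = q + 1 := ⟨p - 1, by have := hp.pos; omega⟩
  simp only [Nat.add_sub_cancel] at hn
  obtain ⟨s, rfl⟩ : ∃ s, n = e + s + 1 := ⟨n - e - 1, by
    by_contra hne
    have : n ≤ e := by omega
    nlinarith⟩
  -- `h' = h + π ^ (s + 1) * u` with `u` as in the header, where `p (s + 1) = n + t`
  obtain ⟨t, ht⟩ := Nat.exists_eq_add_of_le (show e + s + 1 ≤ (q + 1) * (s + 1) by nlinarith)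
  obtain ⟨g, hg⟩ := hdvd
  obtain ⟨u, v, huv⟩ := exists_C_dvd_C_pow_mul_pow_add_mul_sub hπ hp t
    ((hw.map (C (R := R))).mul (hh.pow q)) g
  obtain ⟨r, hr⟩ := exists_add_pow_prime_eq_add_mul_sq hp h (C π ^ (s + 1) * u)
  have hpC : ((q + 1 : ℕ) : R⟦X⟧) = C w * C π ^ e := by
    rw [← map_natCast (C (R := R)), hpw, map_mul, map_pow]
  have hpow : (C π ^ (s + 1)) ^ (q + 1) = C π ^ (e + s + 1) * C π ^ t := by
    rw [← pow_mul, ← pow_add, mul_comm, ht]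
  refine ⟨h + C π ^ (s + 1) * u, isUnit_of_dvd_sub (not_isUnit_C_of_maximalIdeal_eq hπ) hh ?_,
    ⟨-(v + C w * C π ^ s * u ^ 2 * r), ?_⟩, ?_⟩
  · rw [add_sub_cancel_left]
    exact (dvd_pow_self _ s.succ_ne_zero).mul_right u
  · simp only [Nat.add_sub_cancel] at hr
    linear_combination hg - hr - (h ^ q * (C π ^ (s + 1) * u) + (C π ^ (s + 1) * u) ^ 2 * r) * hpC
      - u ^ (q + 1) * hpow - C π ^ (e + s + 1) * huv
  · rw [show e + s + 1 - e = s + 1 by omega, add_sub_cancel_left]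
    exact dvd_mul_right _ _

theorem not_C_pow_dvd_sub_pow [IsAdicComplete (maximalIdeal R) R]
    (hπ : maximalIdeal R = Ideal.span {π}) (hp : p.Prime) (hw : IsUnit w)
    (hpw : (p : R) = w * π ^ e) {f : R⟦X⟧} (hf : ¬∃ g : R⟦X⟧, g ^ p = f) {h : R⟦X⟧}
    (hh : IsUnit h) {n : ℕ} (hn : p * e ≤ n * (p - 1)) : ¬C π ^ n ∣ f - h ^ p := by
  intro hdvd
  have : IsAdicComplete (Ideal.span {π}) R := hπ ▸ inferInstance
  have := isAdicComplete_span_C π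
  obtain ⟨x, hx⟩ := exists_eval_eq_zero_of_forall_exists_approx
    (Polynomial.C f - Polynomial.X ^ p) IsUnit (N := n) (e := e)
    (fun m hm y hy hdy => by
      simpa using exists_isUnit_C_pow_succ_dvd_sub_pow hπ hp hw hpw hy
        (hn.trans (Nat.mul_le_mul_right _ hm)) (by simpa using hdy))
    hh (by simpa using hdvd)
  exact hf ⟨x, (sub_eq_zero.mp (by simpa using hx)).symm⟩

end UniformizedLocalRing

namespace PowerSeries

open IsDiscreteValuationRing

variable {R : Type*} [CommRing R] [IsDomain R] [IsDiscreteValuationRing R]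

theorem C_pow_dvd_iff_le_iInf_addVal {π : R} (hπ : Irreducible π) {φ : R⟦X⟧} {n : ℕ} :
    C π ^ n ∣ φ ↔ (n : ℕ∞) ≤ ⨅ i, addVal R (coeff i φ) := by
  simp_rw [le_iInf_iff, ← map_pow, C_dvd_iff, ← hπ.addVal_pow, addVal_le_iff_dvd]

theorem C_pow_toNat_iInf_addVal_dvd {π : R} (hπ : Irreducible π) {φ : R⟦X⟧} (hφ : φ ≠ 0) :
    C π ^ (⨅ i, addVal R (coeff i φ)).toNat ∣ φ := by
  rw [C_pow_dvd_iff_le_iInf_addVal hπ, ENat.natCast_toNat]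
  intro htop
  exact hφ <| ext fun i => by simpa [addVal_eq_top_iff] using iInf_eq_top.mp htop i

end PowerSeries

theorem Set.Finite.exists_isLUB_lt {α : Type*} [LinearOrder α] {S : Set α} (hS : S.Finite)
    (hne : S.Nonempty) {c : α} (hc : ∀ q ∈ S, q < c) : ∃ μ, IsLUB S μ ∧ μ < c :=
  let ⟨μ, hμ, hmax⟩ := S.exists_max_image id hS hne
  ⟨μ, ⟨hmax, fun _ hb => hb hμ⟩, hc μ hμ⟩

theorem stmt8_general (R : Type*) [CommRing R] [IsDomain R] [IsDiscreteValuationRing R]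
    [IsAdicComplete (IsLocalRing.maximalIdeal R) R] [CharZero R]
    (p : ℕ) (hp : p.Prime) [CharP (IsLocalRing.ResidueField R) p]
    [IsAlgClosed (IsLocalRing.ResidueField R)]
    (π : R) (hπ : Irreducible π)
    (f : PowerSeries R) (hnp : ¬ ∃ g : PowerSeries R, g ^ p = f) :
    ∃ μ : ℚ,
      IsLUB {q : ℚ | ∃ h : PowerSeries R, IsUnit h ∧ q = gaussV0 R (p : R) (f - h ^ p)} μ ∧
      μ < (p : ℚ) / ((p : ℚ) - 1) := by
  obtain ⟨e, w, hpw⟩ :=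
    IsDiscreteValuationRing.eq_unit_mul_pow_irreducible (Nat.cast_ne_zero.mpr hp.ne_zero) hπ
  have he : 0 < e := pos_of_natCast_eq_mul_pow w.isUnit hpw
  have hval : ∀ h : R⟦X⟧, IsUnit h →
      ∃ m : ℕ, m * (p - 1) < p * e ∧ gaussV0 R (p : R) (f - h ^ p) = m / e := by
    intro h hh
    have hne : f - h ^ p ≠ 0 := fun h0 => hnp ⟨h, (sub_eq_zero.mp h0).symm⟩
    refine ⟨_, lt_of_not_ge fun hle => not_C_pow_dvd_sub_pow hπ.maximalIdeal_eq hp w.isUnit hpw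
      hnp hh hle (C_pow_toNat_iInf_addVal_dvd hπ hne), ?_⟩
    rw [gaussV0, IsDiscreteValuationRing.addVal_def _ w hπ e hpw, ENat.toNat_natCast]
  have hp1 : 0 < p - 1 := by have := hp.two_le; omega
  apply Set.Finite.exists_isLUB_lt
  · refine ((Finset.range (p * e)).finite_toSet.image fun m : ℕ => (m : ℚ) / e).subset ?_
    rintro _ ⟨h, hh, rfl⟩
    obtain ⟨m, hm, hq⟩ := hval h hh
    have : m ≤ m * (p - 1) := Nat.le_mul_of_pos_right m hp1
    exact ⟨m, by simp only [Finset.coe_range, Set.mem_Iio]; omega, hq.symm⟩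
  · exact ⟨_, 1, isUnit_one, rfl⟩
  · rintro _ ⟨h, hh, rfl⟩
    obtain ⟨m, hm, hq⟩ := hval h hh
    rw [hq, ← Nat.cast_pred hp.pos,
      div_lt_div_iff₀ (by exact_mod_cast he) (by exact_mod_cast hp1)]
    exact_mod_cast hm

/-- Let `A = R[[t]]` with `R` a complete discrete valuation ring of mixed characteristic
`(0,p)`, the valuation normalized by `v(p) = 1`.  Let `f ∈ A^×` be a unit which is not a
`p`-th power in `A`, and suppose the special fiber of the normalization `B` of `A` in the
Kummer extension `Frac(A)(f^{1/p})` is reduced.  Then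
`μ := sup { v₀(f - h^p) : h ∈ A^× }` exists and satisfies `μ < p/(p-1)`. -/
theorem stmt8 (R : Type*) [CommRing R] [IsDomain R] [IsDiscreteValuationRing R]
    [IsAdicComplete (IsLocalRing.maximalIdeal R) R] [CharZero R]
    (p : ℕ) (hp : p.Prime) [CharP (IsLocalRing.ResidueField R) p]
    [IsAlgClosed (IsLocalRing.ResidueField R)]
    (π : R) (hπ : Irreducible π)
    (f : PowerSeries R) (hf : IsUnit f) (hnp : ¬ ∃ g : PowerSeries R, g ^ p = f)
    -- the Kummer extension `L = Frac(A)(y)`, `y^p = f`, of the fraction field `K` of `A`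
    (K : Type*) [Field K] [Algebra (PowerSeries R) K] [IsFractionRing (PowerSeries R) K]
    (L : Type*) [Field L] [Algebra K L] [Algebra (PowerSeries R) L]
    [IsScalarTower (PowerSeries R) K L] [FiniteDimensional K L]
    (hrank : Module.finrank K L = p)
    (y : L) (hy : y ^ p = algebraMap (PowerSeries R) L f)
    -- the special fiber of the normalization `B` of `A` in `L` is reduced
    (hred : IsReduced ((integralClosure (PowerSeries R) L) ⧸
      Ideal.span {algebraMap (PowerSeries R) (integralClosure (PowerSeries R) L)
        (PowerSeries.C (R := R) π)})) :
    ∃ μ : ℚ,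
      IsLUB {q : ℚ | ∃ h : PowerSeries R, IsUnit h ∧ q = gaussV0 R (p : R) (f - h ^ p)} μ ∧
      μ < (p : ℚ) / ((p : ℚ) - 1) :=
  stmt8_general R p hp π hπ f hnp
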